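/- Let (A, B) be an α-valuation of the complete bipartite graph K_{a,a}. Then the images of A and B under reduction modulo a²+1 form an (a²+1, 2, a; 1)-SEDF in the cyclic group Z_{a²+1}: the reduced sets Ā and B̄ are disjoint subsets of Z_{a²+1} of size a each, and each of the multisets {x − y : x ∈ Ā, y ∈ B̄} and {y − x : x ∈ Ā, y ∈ B̄} contains every nonzero element of Z_{a²+1} exactly once. -/

import Mathlib

/-- An α-valuation of the complete bipartite graph `K_{a,b}`, identified with a pair
`(A, B)` of finite sets of nonnegative integers: `|A| = a`, `|B| = b`, every element of `A`
is strictly less than every element of `B`, and the `a*b` differences `y - z` with `y ∈ B`,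
`z ∈ A` are pairwise distinct and are exactly the integers `1, 2, ..., a*b`. -/
def IsAlphaValuation (a b : ℕ) (A B : Finset ℕ) : Prop :=
  0 < a ∧ 0 < b ∧ A.card = a ∧ B.card = b ∧
  (∀ z ∈ A, ∀ y ∈ B, z < y) ∧
  Set.InjOn (fun p : ℕ × ℕ => p.1 - p.2) ↑(B ×ˢ A) ∧
  (B ×ˢ A).image (fun p : ℕ × ℕ => p.1 - p.2) = Finset.Icc 1 (a * b)
/-- An `(n, 2, k; 1)`-SEDF in the cyclic group `ZMod n`: a pair `(A, B)` of disjoint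
`k`-element subsets such that each of the multisets `{x - y : x ∈ A, y ∈ B}` and
`{y - x : x ∈ A, y ∈ B}` contains every nonzero element of `ZMod n` exactly once. -/
def IsSEDF (n k : ℕ) (A B : Finset (ZMod n)) : Prop :=
  Disjoint A B ∧ A.card = k ∧ B.card = k ∧
  (∀ d : ZMod n, d ≠ 0 →
    ∃! p : ZMod n × ZMod n, p.1 ∈ A ∧ p.2 ∈ B ∧ p.1 - p.2 = d) ∧
  (∀ d : ZMod n, d ≠ 0 →
    ∃! p : ZMod n × ZMod n, p.1 ∈ A ∧ p.2 ∈ B ∧ p.2 - p.1 = d)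

/-!
All labels of an α-valuation of `K_{a,b}` lie in a window of length `a * b`, so reduction modulo
`n = a * b + 1` is injective on `A ∪ B`. The differences `y - z` lie in `[1, a * b]`, hence are
unchanged by reduction, and they run exactly once through `1, …, a * b`, i.e. through the nonzero
residues modulo `n`. Negating gives the condition on `x - y`.
-/

theorem ZMod.natCast_injOn_of_lt_add {n : ℕ} {S : Set ℕ} (hS : ∀ u ∈ S, ∀ v ∈ S, v < u + n) :
    S.InjOn (Nat.cast : ℕ → ZMod n) := by
  intro u hu v hv huv
  refine ((ZMod.natCast_eq_natCast_iff u v n).1 huv).eq_of_abs_lt (abs_sub_lt_iff.2 ⟨?_, ?_⟩)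
  · have := hS u hu v hv
    omega
  · have := hS v hv u hu
    omega

namespace IsAlphaValuation

variable {a b : ℕ} {A B : Finset ℕ}

lemma card_left (h : IsAlphaValuation a b A B) : A.card = a := h.2.2.1

lemma card_right (h : IsAlphaValuation a b A B) : B.card = b := h.2.2.2.1

lemma lt (h : IsAlphaValuation a b A B) {z y : ℕ} (hz : z ∈ A) (hy : y ∈ B) : z < y :=
  h.2.2.2.2.1 z hz y hy

lemma injOn_sub (h : IsAlphaValuation a b A B) :
    Set.InjOn (fun p : ℕ × ℕ => p.1 - p.2) ↑(B ×ˢ A) :=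
  h.2.2.2.2.2.1

lemma image_sub (h : IsAlphaValuation a b A B) :
    (B ×ˢ A).image (fun p : ℕ × ℕ => p.1 - p.2) = Finset.Icc 1 (a * b) :=
  h.2.2.2.2.2.2

lemma sub_mem_Icc (h : IsAlphaValuation a b A B) {z y : ℕ} (hz : z ∈ A) (hy : y ∈ B) :
    y - z ∈ Finset.Icc 1 (a * b) :=
  h.image_sub ▸ Finset.mem_image_of_mem (fun p : ℕ × ℕ => p.1 - p.2)
    (Finset.mem_product.2 ⟨hy, hz⟩ : (y, z) ∈ B ×ˢ A)

lemma disjoint (h : IsAlphaValuation a b A B) : Disjoint A B :=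
  Finset.disjoint_left.2 fun _ hz hz' => lt_irrefl _ (h.lt hz hz')

lemma lt_add_of_mem_union (h : IsAlphaValuation a b A B) {u v : ℕ} (hu : u ∈ A ∪ B)
    (hv : v ∈ A ∪ B) : v < u + (a * b + 1) := by
  obtain ⟨z₀, hz₀⟩ : A.Nonempty := Finset.card_pos.1 (h.card_left ▸ h.1)
  obtain ⟨y₀, hy₀⟩ : B.Nonempty := Finset.card_pos.1 (h.card_right ▸ h.2.1)
  rcases Finset.mem_union.1 hu with hu | hu <;> rcases Finset.mem_union.1 hv with hv | hv
  · have := Finset.mem_Icc.1 (h.sub_mem_Icc hu hy₀)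
    have := h.lt hv hy₀
    omega
  · have := Finset.mem_Icc.1 (h.sub_mem_Icc hu hv)
    omega
  · have := h.lt hv hu
    omega
  · have := Finset.mem_Icc.1 (h.sub_mem_Icc hz₀ hv)
    have := h.lt hz₀ hu
    omega

lemma natCast_injOn_union (h : IsAlphaValuation a b A B) :
    Set.InjOn (Nat.cast : ℕ → ZMod (a * b + 1)) ↑(A ∪ B) :=
  ZMod.natCast_injOn_of_lt_add fun _ hu _ hv => h.lt_add_of_mem_union hu hv

lemma val_natCast_sub_natCast (h : IsAlphaValuation a b A B) {z y : ℕ} (hz : z ∈ A)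
    (hy : y ∈ B) : ((y : ZMod (a * b + 1)) - z).val = y - z := by
  have := Finset.mem_Icc.1 (h.sub_mem_Icc hz hy)
  rw [← Nat.cast_sub (h.lt hz hy).le, ZMod.val_natCast_of_lt (by omega)]

lemma existsUnique_sub_eq (h : IsAlphaValuation a b A B) (d : ZMod (a * b + 1)) (hd : d ≠ 0) :
    ∃! p : ZMod (a * b + 1) × ZMod (a * b + 1),
      p.1 ∈ A.image Nat.cast ∧ p.2 ∈ B.image Nat.cast ∧ p.2 - p.1 = d := by
  have hval : d.val ∈ Finset.Icc 1 (a * b) :=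
    Finset.mem_Icc.2 ⟨Nat.one_le_iff_ne_zero.2 ((ZMod.val_ne_zero d).2 hd),
      Nat.lt_succ_iff.1 (ZMod.val_lt d)⟩
  rw [← h.image_sub] at hval
  obtain ⟨⟨y, z⟩, hyz, hdiff : y - z = d.val⟩ := Finset.mem_image.1 hval
  obtain ⟨hy, hz⟩ := Finset.mem_product.1 hyz
  refine ⟨(z, y), ⟨Finset.mem_image_of_mem _ hz, Finset.mem_image_of_mem _ hy,
    ZMod.val_injective _ (by rw [h.val_natCast_sub_natCast hz hy, hdiff])⟩, ?_⟩
  rintro ⟨_, _⟩ ⟨hp₁, hp₂, hd'⟩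
  obtain ⟨z', hz', rfl⟩ := Finset.mem_image.1 hp₁
  obtain ⟨y', hy', rfl⟩ := Finset.mem_image.1 hp₂
  have hsub : y' - z' = y - z := by rw [← h.val_natCast_sub_natCast hz' hy', hd', hdiff]
  obtain ⟨rfl, rfl⟩ := Prod.mk.inj <| h.injOn_sub
    (Finset.mem_product.2 ⟨hy', hz'⟩ : (y', z') ∈ B ×ˢ A)
    (Finset.mem_product.2 ⟨hy, hz⟩ : (y, z) ∈ B ×ˢ A) hsub
  rfl

end IsAlphaValuation

theorem stmt_15 (a : ℕ) (A B : Finset ℕ) (h : IsAlphaValuation a a A B) :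
    IsSEDF (a ^ 2 + 1) a
      (A.image (fun z : ℕ => (z : ZMod (a ^ 2 + 1))))
      (B.image (fun y : ℕ => (y : ZMod (a ^ 2 + 1)))) := by
  rw [sq]
  have hinj := h.natCast_injOn_union
  rw [Finset.coe_union] at hinj
  refine ⟨?_, ?_, ?_, fun d hd => ?_, h.existsUnique_sub_eq⟩
  · rw [← Finset.disjoint_coe, Finset.coe_image, Finset.coe_image]
    exact (Finset.disjoint_coe.2 h.disjoint).image hinj Set.subset_union_left Set.subset_union_right
  · rw [Finset.card_image_of_injOn (hinj.mono Set.subset_union_left), h.card_left]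
  · rw [Finset.card_image_of_injOn (hinj.mono Set.subset_union_right), h.card_right]
  · have hswap (p : ZMod (a * a + 1) × ZMod (a * a + 1)) : p.2 - p.1 = -d ↔ p.1 - p.2 = d := by
      rw [← neg_sub, neg_inj]
    simpa only [hswap] using h.existsUnique_sub_eq (-d) (neg_ne_zero.2 hd)
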